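/- arXiv:2108.05022 — 3 statements merged into one kernel-verified Lean document; each statement's English description precedes it below -/
import Mathlib

section
/- (Warm-start clearing correctness) Let D_q (l×m) and D_{q+1} (m×n) satisfy D_q ∘ D_{q+1} = 0. Suppose R_{q+1} = D_{q+1} V_{q+1} and R_q^0 = D_q V_q^0 where V_q^0 is an invertible upper-triangular m×m matrix whose column i has pivot i for all i. Define V_q^1 by setting column i equal to R_{q+1}[j] whenever i = piv(R_{q+1}[j]) for some column j of R_{q+1}, and equal to V_q^0[i] otherwise; define R_q^1 analogously with the zero column in cleared positions and R_q^0[i] otherwise. Assume the pivots of nonzero columns of R_{q+1} are distinct. Then R_q^1 = D_q V_q^1, and V_q^1 is upper-triangular and invertible. -/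
/-!
Every column of `V_q^1` has its pivot on the diagonal: a kept column is a column of `V_q^0`,
and a cleared column `i` is a column of `R_{q+1}` whose pivot is `i`. Hence `V_q^1` is upper
triangular with nonzero diagonal, so invertible. The columns of `D_q V_q^1` are columns of
`D_q V_q^0 = R_q^0` or of `D_q R_{q+1} = D_q D_{q+1} V_{q+1} = 0`, which are exactly the columns
of `R_q^1`.
-/

open scoped Matrix

def HasPivot {ι k : Type*} [LT ι] [Zero k] (v : ι → k) (i : ι) : Prop :=
  v i ≠ 0 ∧ ∀ i', i < i' → v i' = 0

namespace Matrix

theorem isUpperTriangular_of_hasPivot_col {ι k : Type*} [LT ι] [Zero k] {M : Matrix ι ι k}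
    (h : ∀ i, HasPivot (Mᵀ i) i) : M.IsUpperTriangular :=
  fun i j hji => (h j).2 i hji

theorem isUnit_of_hasPivot_col {ι k : Type*} [Fintype ι] [DecidableEq ι] [LinearOrder ι]
    [Field k] {M : Matrix ι ι k} (h : ∀ i, HasPivot (Mᵀ i) i) : IsUnit M := by
  rw [isUnit_iff_isUnit_det, isUnit_iff_ne_zero,
    det_of_isUpperTriangular (isUpperTriangular_of_hasPivot_col h)]
  exact Finset.prod_ne_zero_iff.2 fun i _ => (h i).1

theorem mul_apply_eq_of_col_eq {l m n p α : Type*} [Fintype m] [NonUnitalNonAssocSemiring α]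
    (D : Matrix l m α) {A : Matrix m n α} {B : Matrix m p α} {i : n} {j : p}
    (h : ∀ s, A s i = B s j) (r : l) : (D * A) r i = (D * B) r j := by
  simp only [mul_apply, h]

end Matrix

theorem stmt_7_general {l m n : ℕ} {k : Type*} [Field k]
    (Dq : Matrix (Fin l) (Fin m) k) (Dq1 : Matrix (Fin m) (Fin n) k)
    (Vq1 : Matrix (Fin n) (Fin n) k) (Rq1 : Matrix (Fin m) (Fin n) k)
    (Vq0 : Matrix (Fin m) (Fin m) k) (Rq0 : Matrix (Fin l) (Fin m) k)
    (hDD : Dq * Dq1 = 0) (hRq1 : Rq1 = Dq1 * Vq1) (hRq0 : Rq0 = Dq * Vq0)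
    (hVq0UT : ∀ i i' : Fin m, i' < i → Vq0 i i' = 0)
    (hVq0diag : ∀ i : Fin m, Vq0 i i ≠ 0)
    (pv : Fin n → Fin m)
    (hpv : ∀ j : Fin n, (∃ i, Rq1 i j ≠ 0) →
      (Rq1 (pv j) j ≠ 0 ∧ ∀ i : Fin m, pv j < i → Rq1 i j = 0))
    (Vq1new : Matrix (Fin m) (Fin m) k) (Rq1new : Matrix (Fin l) (Fin m) k)
    (hVcleared : ∀ (i : Fin m) (j : Fin n), (∃ i', Rq1 i' j ≠ 0) → pv j = i →
      ∀ r : Fin m, Vq1new r i = Rq1 r j)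
    (hVkept : ∀ i : Fin m, (∀ j : Fin n, (∃ i', Rq1 i' j ≠ 0) → pv j ≠ i) →
      ∀ r : Fin m, Vq1new r i = Vq0 r i)
    (hRcleared : ∀ (i : Fin m) (j : Fin n), (∃ i', Rq1 i' j ≠ 0) → pv j = i →
      ∀ r : Fin l, Rq1new r i = 0)
    (hRkept : ∀ i : Fin m, (∀ j : Fin n, (∃ i', Rq1 i' j ≠ 0) → pv j ≠ i) →
      ∀ r : Fin l, Rq1new r i = Rq0 r i) :
    Rq1new = Dq * Vq1new ∧
      (∀ i i' : Fin m, i' < i → Vq1new i i' = 0) ∧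
      IsUnit Vq1new := by
  have hDR : Dq * Rq1 = 0 := by rw [hRq1, ← Matrix.mul_assoc, hDD, Matrix.zero_mul]
  have hcol : ∀ i, HasPivot (Vq1newᵀ i) i ∧ ∀ r, Rq1new r i = (Dq * Vq1new) r i := by
    intro i
    by_cases hclr : ∃ j, (∃ i', Rq1 i' j ≠ 0) ∧ pv j = i
    · obtain ⟨j, hj, rfl⟩ := hclr
      have hV := hVcleared _ j hj rfl
      refine ⟨by simpa [HasPivot, hV] using hpv j hj, fun r => ?_⟩
      rw [hRcleared _ j hj rfl r, Matrix.mul_apply_eq_of_col_eq Dq hV, hDR, Matrix.zero_apply]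
    · push Not at hclr
      have hV := hVkept i hclr
      refine ⟨by simpa [HasPivot, hV] using ⟨hVq0diag i, fun i' h => hVq0UT i' i h⟩,
        fun r => ?_⟩
      rw [hRkept i hclr r, hRq0, Matrix.mul_apply_eq_of_col_eq Dq hV]
  exact ⟨Matrix.ext fun r i => (hcol i).2 r,
    Matrix.isUpperTriangular_of_hasPivot_col fun i => (hcol i).1,
    Matrix.isUnit_of_hasPivot_col fun i => (hcol i).1⟩

/-- (Warm-start clearing correctness) Suppose D_q D_{q+1} = 0, R_{q+1} = D_{q+1} V_{q+1},
and R_q^0 = D_q V_q^0 where V_q^0 is upper-triangular with column i having pivot i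
(diagonal nonzero). For each nonzero column j of R_{q+1}, `pv j` is its pivot
(largest nonzero row index), and these pivots are distinct. Define V_q^1 to have
column i equal to R_{q+1}[j] whenever i = pv j for a nonzero column j, and V_q^0[i]
otherwise; define R_q^1 to have column i zero in cleared positions and R_q^0[i]
otherwise. Then R_q^1 = D_q V_q^1 and V_q^1 is upper-triangular and invertible. -/
theorem stmt_7 {l m n : ℕ} {k : Type*} [Field k]
    (Dq : Matrix (Fin l) (Fin m) k) (Dq1 : Matrix (Fin m) (Fin n) k)
    (Vq1 : Matrix (Fin n) (Fin n) k) (Rq1 : Matrix (Fin m) (Fin n) k)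
    (Vq0 : Matrix (Fin m) (Fin m) k) (Rq0 : Matrix (Fin l) (Fin m) k)
    (hDD : Dq * Dq1 = 0) (hRq1 : Rq1 = Dq1 * Vq1) (hRq0 : Rq0 = Dq * Vq0)
    (hVq0UT : ∀ i i' : Fin m, i' < i → Vq0 i i' = 0)
    (hVq0diag : ∀ i : Fin m, Vq0 i i ≠ 0)
    (pv : Fin n → Fin m)
    (hpv : ∀ j : Fin n, (∃ i, Rq1 i j ≠ 0) →
      (Rq1 (pv j) j ≠ 0 ∧ ∀ i : Fin m, pv j < i → Rq1 i j = 0))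
    (hdistinct : ∀ j j' : Fin n, (∃ i, Rq1 i j ≠ 0) → (∃ i, Rq1 i j' ≠ 0) →
      j ≠ j' → pv j ≠ pv j')
    (Vq1new : Matrix (Fin m) (Fin m) k) (Rq1new : Matrix (Fin l) (Fin m) k)
    (hVcleared : ∀ (i : Fin m) (j : Fin n), (∃ i', Rq1 i' j ≠ 0) → pv j = i →
      ∀ r : Fin m, Vq1new r i = Rq1 r j)
    (hVkept : ∀ i : Fin m, (∀ j : Fin n, (∃ i', Rq1 i' j ≠ 0) → pv j ≠ i) →
      ∀ r : Fin m, Vq1new r i = Vq0 r i)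
    (hRcleared : ∀ (i : Fin m) (j : Fin n), (∃ i', Rq1 i' j ≠ 0) → pv j = i →
      ∀ r : Fin l, Rq1new r i = 0)
    (hRkept : ∀ i : Fin m, (∀ j : Fin n, (∃ i', Rq1 i' j ≠ 0) → pv j ≠ i) →
      ∀ r : Fin l, Rq1new r i = Rq0 r i) :
    Rq1new = Dq * Vq1new ∧
      (∀ i i' : Fin m, i' < i → Vq1new i i' = 0) ∧
      IsUnit Vq1new :=
  stmt_7_general Dq Dq1 Vq1 Rq1 Vq0 Rq0 hDD hRq1 hRq0 hVq0UT hVq0diag pv hpv Vq1new Rq1new hVcleared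
    hVkept hRcleared hRkept
end

section
/- If D V = R where V is upper-triangular and invertible and R is reduced (nonzero columns have pairwise-distinct pivots), then for each j, R[j] = 0 if and only if column j of D lies in the span of columns 1,...,j−1 of D. Equivalently, the rank of the submatrix consisting of the first j columns of D equals the number of nonzero columns among R[1],...,R[j]. -/
open Submodule Matrix Finset

section Auxx
variable {m n : ℕ} {k : Type*} [Field k]


lemma aux_span_le (A C : Matrix (Fin m) (Fin n) k) (B : Matrix (Fin n) (Fin n) k)
    (h : A * B = C) (hB : ∀ i j : Fin n, j < i → B i j = 0) (J : ℕ) :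
    Submodule.span k ((fun i : Fin n => (fun r => C r i)) '' {i : Fin n | (i : ℕ) < J}) ≤
    Submodule.span k ((fun i : Fin n => (fun r => A r i)) '' {i : Fin n | (i : ℕ) < J}) := by
  rw [Submodule.span_le]
  rintro _ ⟨j, hj, rfl⟩
  show (fun r => C r j) ∈ _
  have hCj : (fun r => C r j) = ∑ i : Fin n, B i j • (fun r => A r i) := by
    funext r
    rw [← h]
    simp [Matrix.mul_apply, Finset.sum_apply, mul_comm]
  rw [hCj]
  refine Submodule.sum_mem _ fun i _ => ?_
  by_cases hij : i ≤ j
  · exact Submodule.smul_mem _ _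
      (Submodule.subset_span ⟨i, lt_of_le_of_lt (Fin.le_def.mp hij) hj, rfl⟩)
  · rw [hB i j (lt_of_not_ge hij), zero_smul]
    exact Submodule.zero_mem _

lemma aux_indep (R : Matrix (Fin m) (Fin n) k) (p : Fin n → Fin m)
    (hp : ∀ j : Fin n, (∃ i, R i j ≠ 0) → (R (p j) j ≠ 0 ∧ ∀ i : Fin m, p j < i → R i j = 0))
    (hred : ∀ j j' : Fin n, (∃ i, R i j ≠ 0) → (∃ i, R i j' ≠ 0) → j ≠ j' → p j ≠ p j') :
    LinearIndependent k (fun x : {i : Fin n // ∃ r, R r i ≠ 0} => (fun r => R r x.1)) := by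
  classical
  rw [Fintype.linearIndependent_iff]
  intro g hsum
  by_contra hc
  push_neg at hc
  obtain ⟨x0, hx0⟩ := hc
  set d : Fin n → k := fun i => if h : ∃ r, R r i ≠ 0 then g ⟨i, h⟩ else 0 with hd
  have hdg : ∀ x : {i : Fin n // ∃ r, R r i ≠ 0}, d x.1 = g x := by
    intro x
    simp [hd, dif_pos x.2]
  have hdsum : ∑ i : Fin n, d i • (fun r => R r i) = 0 := by
    rw [← hsum]
    have h1 : ∑ x : {i : Fin n // ∃ r, R r i ≠ 0}, g x • (fun r => R r x.1) =
        ∑ x : {i : Fin n // ∃ r, R r i ≠ 0}, d x.1 • (fun r => R r x.1) :=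
      Finset.sum_congr rfl (fun x _ => by rw [hdg])
    have h2 : ∑ i ∈ Finset.univ.filter (fun i : Fin n => ∃ r, R r i ≠ 0),
        d i • (fun r => R r i) =
        ∑ x : {i : Fin n // ∃ r, R r i ≠ 0}, d x.1 • (fun r => R r x.1) :=
      Finset.sum_subtype _ (by simp) _
    have h3 : ∑ i ∈ Finset.univ.filter (fun i : Fin n => ∃ r, R r i ≠ 0),
        d i • (fun r => R r i) = ∑ i : Fin n, d i • (fun r => R r i) := by
      apply Finset.sum_filter_of_ne
      intro i _ hne
      by_contra hPi
      exact hne (by simp [hd, dif_neg hPi])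
    rw [h1, ← h2, h3]
  have hdx0 : d x0.1 ≠ 0 := by rw [hdg]; exact hx0
  -- max pivot argument
  set F : Finset (Fin n) := Finset.univ.filter (fun i => d i ≠ 0 ∧ ∃ r, R r i ≠ 0) with hF
  have hjF : (x0 : Fin n) ∈ F := by
    simp only [hF, Finset.mem_filter, Finset.mem_univ, true_and]
    exact ⟨hdx0, x0.2⟩
  obtain ⟨i0, hi0F, hmax⟩ := F.exists_max_image p ⟨x0, hjF⟩
  have hi0 := (Finset.mem_filter.mp hi0F).2
  have hkey : ∑ i : Fin n, d i * R (p i0) i = 0 := by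
    have := congrFun hdsum (p i0)
    simpa [Finset.sum_apply] using this
  rw [Finset.sum_eq_single i0] at hkey
  · exact (mul_ne_zero hi0.1 ((hp i0 hi0.2).1)) hkey
  · intro i _ hne
    by_cases hdi : d i = 0
    · rw [hdi, zero_mul]
    by_cases hRi : ∃ r, R r i ≠ 0
    · have hiF : i ∈ F := by simp [hF, hdi, hRi]
      have hle : p i ≤ p i0 := hmax i hiF
      have hne' : p i ≠ p i0 := hred i i0 hRi hi0.2 hne
      rw [(hp i hRi).2 (p i0) (lt_of_le_of_ne hle hne'), mul_zero]
    · exact absurd (by simp [hd, dif_neg hRi]) hdi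
  · intro h; exact absurd (Finset.mem_univ i0) h

end Auxx

set_option maxHeartbeats 1000000 in
/-- If D V = R with V upper-triangular invertible and R reduced (nonzero columns have
pairwise distinct pivots `p`), then for each j, column j of R is zero iff column j of D
lies in the span of the earlier columns of D; equivalently, the rank of the submatrix of
the first J columns of D is the number of nonzero columns among the first J columns of R. -/
theorem stmt_14 {m n : ℕ} {k : Type*} [Field k]
    (D R : Matrix (Fin m) (Fin n) k) (V : Matrix (Fin n) (Fin n) k)
    (hR : D * V = R)
    (hUT : ∀ i j : Fin n, j < i → V i j = 0) (hV : IsUnit V)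
    (p : Fin n → Fin m)
    (hp : ∀ j : Fin n, (∃ i, R i j ≠ 0) →
      (R (p j) j ≠ 0 ∧ ∀ i : Fin m, p j < i → R i j = 0))
    (hred : ∀ j j' : Fin n, (∃ i, R i j ≠ 0) → (∃ i, R i j' ≠ 0) → j ≠ j' → p j ≠ p j') :
    (∀ j : Fin n, ((fun r => R r j) = 0 ↔
        (fun r => D r j) ∈ Submodule.span k
          ((fun i : Fin n => (fun r => D r i)) '' {i : Fin n | i < j}))) ∧
      (∀ (J : ℕ) (hJ : J ≤ n),
        (D.submatrix id (Fin.castLE hJ)).rank =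
          Nat.card {i : Fin J // (fun r => R r (Fin.castLE hJ i)) ≠ 0}) := by
  classical
  have hBT : V.BlockTriangular id := fun i j hij => hUT i j hij
  haveI : Invertible V := hV.invertible
  have hD : R * V⁻¹ = D := by rw [← hR, Matrix.mul_inv_cancel_right_of_invertible]
  have hUTinv : ∀ i j : Fin n, j < i → V⁻¹ i j = 0 := fun i j hij =>
    Matrix.blockTriangular_inv_of_blockTriangular hBT hij
  have hspan : ∀ J : ℕ,
      Submodule.span k ((fun i : Fin n => (fun r => D r i)) '' {i : Fin n | (i : ℕ) < J}) =
      Submodule.span k ((fun i : Fin n => (fun r => R r i)) '' {i : Fin n | (i : ℕ) < J}) :=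
    fun J => le_antisymm (aux_span_le R D V⁻¹ hD hUTinv J) (aux_span_le D R V hR hUT J)
  have hLI := aux_indep R p hp hred
  have hne0 : ∀ j : Fin n, (fun r => R r j) ≠ 0 ↔ ∃ i, R i j ≠ 0 := by
    intro j
    simp [Function.ne_iff]
  have hnotmem : ∀ (j : Fin n) (hj : ∃ i, R i j ≠ 0) (J : ℕ), J ≤ (j : ℕ) →
      (fun r => R r j) ∉ Submodule.span k
        ((fun i : Fin n => (fun r => R r i)) '' {i : Fin n | (i : ℕ) < J}) := by
    intro j hj J hJle hmem
    have hsub : Submodule.span k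
        ((fun i : Fin n => (fun r => R r i)) '' {i : Fin n | (i : ℕ) < J}) ≤
        Submodule.span k ((fun x : {i : Fin n // ∃ r, R r i ≠ 0} => (fun r => R r x.1)) ''
          {x : {i : Fin n // ∃ r, R r i ≠ 0} | ((x : Fin n) : ℕ) < J}) := by
      rw [Submodule.span_le]
      rintro _ ⟨i, hi, rfl⟩
      show (fun r => R r i) ∈ _
      by_cases hRi : ∃ r, R r i ≠ 0
      · exact Submodule.subset_span ⟨⟨i, hRi⟩, hi, rfl⟩
      · push_neg at hRi
        have hz : (fun r => R r i) = 0 := funext hRi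
        rw [hz]; exact Submodule.zero_mem _
    have hnm := hLI.notMem_span_image (s := {x : {i : Fin n // ∃ r, R r i ≠ 0} |
        ((x : Fin n) : ℕ) < J}) (x := ⟨j, hj⟩) (by show ¬ ((j : ℕ) < J); omega)
    exact hnm (hsub hmem)
  constructor
  · intro j
    constructor
    · intro h0
      have h1 : (fun r => D r j) ∈ Submodule.span k
          ((fun i : Fin n => (fun r => D r i)) '' {i : Fin n | (i : ℕ) < (j : ℕ) + 1}) :=
        Submodule.subset_span ⟨j, Nat.lt_succ_self _, rfl⟩
      rw [hspan] at h1
      have h2 : Submodule.span k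
          ((fun i : Fin n => (fun r => R r i)) '' {i : Fin n | (i : ℕ) < (j : ℕ) + 1}) ≤
          Submodule.span k ((fun i : Fin n => (fun r => D r i)) '' {i : Fin n | i < j}) := by
        rw [Submodule.span_le]
        rintro _ ⟨i, hi, rfl⟩
        show (fun r => R r i) ∈ _
        by_cases hij : i = j
        · subst hij
          rw [h0]; exact Submodule.zero_mem _
        · have hilt : (i : ℕ) < (j : ℕ) := by
            have h' : (i : ℕ) ≤ (j : ℕ) := Nat.lt_succ_iff.mp hi
            have : (i : ℕ) ≠ (j : ℕ) := fun hc => hij (Fin.ext hc)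
            omega
          have hmm : (fun r => R r i) ∈ Submodule.span k
              ((fun i : Fin n => (fun r => R r i)) '' {i : Fin n | (i : ℕ) < (j : ℕ)}) :=
            Submodule.subset_span ⟨i, hilt, rfl⟩
          rw [← hspan] at hmm
          exact hmm
      exact h2 h1
    · intro hmem
      by_contra hRj0
      have hj : ∃ i, R i j ≠ 0 := (hne0 j).mp hRj0
      have hRjmem : (fun r => R r j) ∈ Submodule.span k
          ((fun i : Fin n => (fun r => D r i)) '' {i : Fin n | (i : ℕ) < (j : ℕ)}) := by
        have hRj : (fun r => R r j) = ∑ i : Fin n, V i j • (fun r => D r i) := by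
          funext r
          rw [← hR]
          simp [Matrix.mul_apply, Finset.sum_apply, mul_comm]
        rw [hRj]
        refine Submodule.sum_mem _ fun i _ => ?_
        rcases lt_trichotomy i j with h | h | h
        · exact Submodule.smul_mem _ _ (Submodule.subset_span ⟨i, h, rfl⟩)
        · subst h; exact Submodule.smul_mem _ _ hmem
        · rw [hUT i j h, zero_smul]; exact Submodule.zero_mem _
      rw [hspan] at hRjmem
      exact hnotmem j hj (j : ℕ) le_rfl hRjmem
  · intro J hJ
    rw [Matrix.rank_eq_finrank_span_cols]
    have hrange : Set.range (D.submatrix id (Fin.castLE hJ)).col =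
        (fun i : Fin n => (fun r => D r i)) '' {i : Fin n | (i : ℕ) < J} := by
      ext x
      constructor
      · rintro ⟨jj, rfl⟩
        exact ⟨Fin.castLE hJ jj, jj.isLt, rfl⟩
      · rintro ⟨i, hi, rfl⟩
        exact ⟨⟨(i : ℕ), hi⟩, by funext r; rfl⟩
    rw [hrange, hspan J]
    have hvspan : Submodule.span k (Set.range
          (fun x : {i : Fin n // (i : ℕ) < J ∧ ∃ r, R r i ≠ 0} => (fun r => R r x.1))) =
        Submodule.span k ((fun i : Fin n => (fun r => R r i)) '' {i : Fin n | (i : ℕ) < J}) := by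
      apply le_antisymm
      · rw [Submodule.span_le]
        rintro _ ⟨x, rfl⟩
        exact Submodule.subset_span ⟨x.1, x.2.1, rfl⟩
      · rw [Submodule.span_le]
        rintro _ ⟨i, hi, rfl⟩
        show (fun r => R r i) ∈ _
        by_cases hRi : ∃ r, R r i ≠ 0
        · exact Submodule.subset_span ⟨⟨i, hi, hRi⟩, rfl⟩
        · push_neg at hRi
          have hz : (fun r => R r i) = 0 := funext hRi
          rw [hz]; exact Submodule.zero_mem _
    have hvLI : LinearIndependent k
        (fun x : {i : Fin n // (i : ℕ) < J ∧ ∃ r, R r i ≠ 0} => (fun r => R r x.1)) :=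
      hLI.comp
        ((fun x => ⟨x.1, x.2.2⟩) :
          {i : Fin n // (i : ℕ) < J ∧ ∃ r, R r i ≠ 0} → {i : Fin n // ∃ r, R r i ≠ 0})
        (by intro a b hab; exact Subtype.ext (by simpa using congrArg Subtype.val hab))
    rw [← hvspan]
    rw [finrank_span_eq_card hvLI]
    rw [Nat.card_eq_fintype_card]
    refine Fintype.card_congr ⟨?_, ?_, ?_, ?_⟩
    · rintro ⟨i, hi⟩
      refine ⟨⟨(i : ℕ), hi.1⟩, ?_⟩
      have he : Fin.castLE hJ ⟨(i : ℕ), hi.1⟩ = i := Fin.ext rfl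
      rw [he]
      exact (hne0 i).mpr hi.2
    · rintro ⟨i, hi⟩
      exact ⟨Fin.castLE hJ i, i.isLt, (hne0 _).mp hi⟩
    · rintro ⟨i, hi⟩; exact Subtype.ext (Fin.ext rfl)
    · rintro ⟨i, hi⟩; exact Subtype.ext (Fin.ext rfl)
end

section
/- (Uniqueness of pivots in RU decomposition) Suppose D V = R and D V' = R' where V, V' are invertible upper-triangular and R, R' are both reduced. Then R and R' have the same set of (column index, pivot row) pairs: for every j, R[j] = 0 iff R'[j] = 0, and if R[j] ≠ 0 then piv(R[j]) = piv(R'[j]). -/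
/-!
Write `R' = R * W` with `W = V⁻¹ * V'`, an upper-triangular unit and hence with nonzero diagonal.
In a reduced matrix the pivot of a linear combination of columns is the largest pivot among the
nonzero columns it involves, since at that row no other involved column contributes. Column `j`
of `R'` involves column `j` of `R`, so it is nonzero whenever that column is, with pivot at least
`p j`. The symmetric argument with `W⁻¹ = V'⁻¹ * V` gives the reverse inequality.
-/

open Finset Matrix

section Pivots

variable {ι κ k : Type*}

def IsPivot [LT ι] [Zero k] (v : ι → k) (r : ι) : Prop :=
  v r ≠ 0 ∧ ∀ i, r < i → v i = 0

theorem IsPivot.unique [LinearOrder ι] [Zero k] {v : ι → k} {r s : ι}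
    (hr : IsPivot v r) (hs : IsPivot v s) : r = s :=
  le_antisymm (not_lt.mp fun hlt => hr.1 (hs.2 r hlt)) (not_lt.mp fun hlt => hs.1 (hr.2 s hlt))

def IsPivotMap [LT ι] [Zero k] (R : Matrix ι κ k) (p : κ → ι) : Prop :=
  ∀ j, (∃ i, R i j ≠ 0) → IsPivot (fun i => R i j) (p j)

section Reduced

variable [LinearOrder ι] [Fintype κ] [Semiring k] [NoZeroDivisors k]
  {R : Matrix ι κ k} {p : κ → ι}

theorem IsPivotMap.exists_isPivot_mulVec (hp : IsPivotMap R p)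
    (hred : Set.InjOn p {j | ∃ i, R i j ≠ 0}) {c : κ → k} {j : κ} (hc : c j ≠ 0)
    (hj : ∃ i, R i j ≠ 0) :
    ∃ l, (∃ i, R i l ≠ 0) ∧ p j ≤ p l ∧ IsPivot (R *ᵥ c) (p l) := by
  classical
  set S : Finset κ := {l | c l ≠ 0 ∧ ∃ i, R i l ≠ 0}
  obtain ⟨l, hlS, hmax⟩ := S.exists_max_image p ⟨j, by simp [S, hc, hj]⟩
  obtain ⟨hcl, hl⟩ : c l ≠ 0 ∧ ∃ i, R i l ≠ 0 := by simpa [S] using hlS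
  have hvanish : ∀ i l', p l < i ∨ (p l = i ∧ l' ≠ l) → R i l' * c l' = 0 := by
    intro i l' hi
    by_cases hcl' : c l' = 0
    · rw [hcl', mul_zero]
    by_cases hl' : ∃ i, R i l' ≠ 0
    · have hle : p l' ≤ p l := hmax l' (by simp [S, hcl', hl'])
      have hlt : p l' < i := by
        rcases hi with hi | ⟨rfl, hne⟩
        · exact hle.trans_lt hi
        · exact hle.lt_of_ne fun h => hne (hred hl' hl h)
      rw [show R i l' = 0 from (hp l' hl').2 i hlt, zero_mul]
    · rw [not_not.mp (not_exists.mp hl' i), zero_mul]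
  refine ⟨l, hl, hmax j (by simp [S, hc, hj]), ?_, fun i hi => ?_⟩
  · rw [mulVec, dotProduct, sum_eq_single l (fun l' _ hne => hvanish _ l' (.inr ⟨rfl, hne⟩))
      (by simp)]
    exact mul_ne_zero (hp l hl).1 hcl
  · exact sum_eq_zero fun l' _ => hvanish i l' (.inl hi)

theorem IsPivotMap.le_of_mul_eq {R' : Matrix ι κ k} {p' : κ → ι} {W : Matrix κ κ k}
    (hp : IsPivotMap R p) (hred : Set.InjOn p {j | ∃ i, R i j ≠ 0}) (hp' : IsPivotMap R' p')
    (hRW : R * W = R') (hW : ∀ j, W j j ≠ 0) (j : κ) (hj : ∃ i, R i j ≠ 0) :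
    (∃ i, R' i j ≠ 0) ∧ p j ≤ p' j := by
  obtain ⟨l, -, hle, hpiv⟩ := hp.exists_isPivot_mulVec hred (c := fun i => W i j) (hW j) hj
  have hcol : (fun i => R' i j) = R *ᵥ fun i => W i j := by rw [← hRW]; rfl
  rw [← hcol] at hpiv
  have hj' : ∃ i, R' i j ≠ 0 := ⟨p l, hpiv.1⟩
  exact ⟨hj', hle.trans_eq (hpiv.unique (hp' j hj'))⟩

end Reduced

section Triangular

variable [Fintype κ] [LinearOrder κ] [CommRing k] [Nontrivial k] {V V' : Matrix κ κ k}

theorem Matrix.IsUpperTriangular.diag_ne_zero_of_isUnit (hV : V.IsUpperTriangular)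
    (hu : IsUnit V) (j : κ) : V j j ≠ 0 := by
  have hdet : V.det ≠ 0 := ((isUnit_iff_isUnit_det V).mp hu).ne_zero
  rw [det_of_isUpperTriangular hV] at hdet
  exact fun h => hdet (prod_eq_zero (mem_univ j) h)

theorem Matrix.IsUpperTriangular.inv_mul_diag_ne_zero (hV : V.IsUpperTriangular)
    (hu : IsUnit V) (hV' : V'.IsUpperTriangular) (hu' : IsUnit V') (j : κ) :
    (V⁻¹ * V') j j ≠ 0 := by
  classical
  have : Invertible V := hu.invertible
  have hW : (V⁻¹ * V').IsUpperTriangular := (blockTriangular_inv_of_blockTriangular hV).mul hV'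
  exact hW.diag_ne_zero_of_isUnit ((isUnit_nonsing_inv_iff.mpr hu).mul hu') j

end Triangular

end Pivots

/-- (Uniqueness of pivots in RU decompositions) If D V = R and D V' = R' with V, V'
invertible upper-triangular and R, R' reduced (with pivot maps p, p' for nonzero
columns), then R and R' have the same zero columns and the same pivots on nonzero
columns. -/
theorem stmt_17 {m n : ℕ} {k : Type*} [Field k]
    (D R R' : Matrix (Fin m) (Fin n) k) (V V' : Matrix (Fin n) (Fin n) k)
    (hR : D * V = R) (hR' : D * V' = R')
    (hUT : ∀ i j : Fin n, j < i → V i j = 0) (hV : IsUnit V)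
    (hUT' : ∀ i j : Fin n, j < i → V' i j = 0) (hV' : IsUnit V')
    (p p' : Fin n → Fin m)
    (hp : ∀ j : Fin n, (∃ i, R i j ≠ 0) →
      (R (p j) j ≠ 0 ∧ ∀ i : Fin m, p j < i → R i j = 0))
    (hp' : ∀ j : Fin n, (∃ i, R' i j ≠ 0) →
      (R' (p' j) j ≠ 0 ∧ ∀ i : Fin m, p' j < i → R' i j = 0))
    (hred : ∀ j j' : Fin n, (∃ i, R i j ≠ 0) → (∃ i, R i j' ≠ 0) → j ≠ j' → p j ≠ p j')
    (hred' : ∀ j j' : Fin n, (∃ i, R' i j ≠ 0) → (∃ i, R' i j' ≠ 0) → j ≠ j' →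
      p' j ≠ p' j') :
    ∀ j : Fin n, ((∃ i, R i j ≠ 0) ↔ (∃ i, R' i j ≠ 0)) ∧
      ((∃ i, R i j ≠ 0) → p j = p' j) := by
  have hinj : Set.InjOn p {j | ∃ i, R i j ≠ 0} := fun a ha b hb h =>
    not_not.mp fun hne => hred a b ha hb hne h
  have hinj' : Set.InjOn p' {j | ∃ i, R' i j ≠ 0} := fun a ha b hb h =>
    not_not.mp fun hne => hred' a b ha hb hne h
  have hRW : R * (V⁻¹ * V') = R' := by
    rw [← hR, ← hR', ← Matrix.mul_assoc, mul_nonsing_inv_cancel_right _ _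
      ((isUnit_iff_isUnit_det V).mp hV)]
  have hRW' : R' * (V'⁻¹ * V) = R := by
    rw [← hR, ← hR', ← Matrix.mul_assoc, mul_nonsing_inv_cancel_right _ _
      ((isUnit_iff_isUnit_det V').mp hV')]
  have hRR' := IsPivotMap.le_of_mul_eq hp hinj hp' hRW
    (IsUpperTriangular.inv_mul_diag_ne_zero hUT hV hUT' hV')
  have hR'R := IsPivotMap.le_of_mul_eq hp' hinj' hp hRW'
    (IsUpperTriangular.inv_mul_diag_ne_zero hUT' hV' hUT hV)
  exact fun j => ⟨⟨fun hj => (hRR' j hj).1, fun hj => (hR'R j hj).1⟩,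
    fun hj => le_antisymm (hRR' j hj).2 (hR'R j (hRR' j hj).1).2⟩
end
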